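/- Let p be a prime with p ≡ 2 mod 3, i.e., a prime of ℤ[ζ_6] that is inert in ℚ(ζ_6)/ℚ, and let χ be the sextic residue character modulo p on (ℤ[ζ_6]/p)^* given by χ(x) ≡ x^{(p²−1)/6} mod p (composed with a fixed embedding of sixth roots of unity into ℂ). Then the Gauss sum ∑_{x ∈ ℤ[ζ_6]/p, x≠0} χ(x) e(Tr-type additive character evaluated at x/p) equals p·χ(1−2ζ_6), which is p if p ≡ 3 mod 4 and −p if p ≡ 1 mod 4. -/

import Mathlib

/-!
The character `χ` is trivial on `𝔽_p^*`, because `(p² - 1) / 6` is a multiple of `p - 1`.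
Averaging the Gauss sum `G` over the twists `x ↦ c x`, `c ∈ 𝔽_p^*`, and using orthogonality
of the additive characters of `𝔽_p` gives `(p - 1) G = p ∑_{Tr x = 0} χ x`. The trace-zero
line of the quadratic extension `𝔽_{p²}/𝔽_p` is `𝔽_p · s` for `s = 1 - 2ζ`, since Frobenius
sends `ζ` to `ζ⁵ = 1 - ζ` and hence `s` to `-s`; so the right-hand side is `p (p - 1) χ(s)`.
Finally `s^{(p²-1)/6} = (s^{p-1})^{(p+1)/6} = (-1)^{(p+1)/6}`.
-/

open Finset

def mulCharOfField {F R : Type*} [Field F] [CommMonoidWithZero R] (χ : F → R) (h0 : χ 0 = 0)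
    (h1 : χ 1 = 1) (hmul : ∀ x y, χ (x * y) = χ x * χ y) : MulChar F R where
  toFun := χ
  map_one' := h1
  map_mul' := hmul
  map_nonunit' x hx := by rw [show x = 0 by simpa [isUnit_iff_ne_zero] using hx, h0]

@[simp]
lemma coe_mulCharOfField {F R : Type*} [Field F] [CommMonoidWithZero R] (χ : F → R) (h0 : χ 0 = 0)
    (h1 : χ 1 = 1) (hmul : ∀ x y, χ (x * y) = χ x * χ y) : ⇑(mulCharOfField χ h0 h1 hmul) = χ :=
  rfl

section SixthRootsOfUnity

variable {R : Type*} [CommRing R] [IsDomain R] {ζ : R}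

lemma IsPrimitiveRoot.pow_three_eq_neg_one (h : IsPrimitiveRoot ζ 6) : ζ ^ 3 = -1 :=
  (h.pow (by norm_num) (by norm_num : 6 = 3 * 2)).eq_neg_one_of_two_right

lemma IsPrimitiveRoot.sq_sub_self_add_one (h : IsPrimitiveRoot ζ 6) : ζ ^ 2 - ζ + 1 = 0 := by
  simpa [Polynomial.cyclotomic_six] using h.isRoot_cyclotomic (by norm_num)

lemma IsPrimitiveRoot.one_sub_two_mul_sq (h : IsPrimitiveRoot ζ 6) : (1 - 2 * ζ) ^ 2 = -3 := by
  linear_combination 4 * h.sq_sub_self_add_one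

end SixthRootsOfUnity

section CharP

variable {F : Type*} [Field F] {p : ℕ} [Fact p.Prime] [CharP F p] {ζ : F}

lemma IsPrimitiveRoot.one_sub_two_mul_pow_char (hζ : IsPrimitiveRoot ζ 6) (hp : p % 6 = 5) :
    (1 - 2 * ζ) ^ p = -(1 - 2 * ζ) := by
  have hζp : ζ ^ p = ζ ^ 5 := by rw [pow_eq_pow_mod p hζ.pow_eq_one, hp]
  rw [← frobenius_def, map_sub, map_one, map_mul, map_ofNat, frobenius_def, hζp]
  linear_combination (-2 * (ζ ^ 3 + ζ ^ 2 - 1)) * hζ.sq_sub_self_add_one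

lemma IsPrimitiveRoot.one_sub_two_mul_ne_zero (hζ : IsPrimitiveRoot ζ 6) (hp : p ≠ 3) :
    1 - 2 * ζ ≠ 0 := by
  intro h
  have h3 : ((3 : ℕ) : F) = 0 := by
    have := hζ.one_sub_two_mul_sq
    rw [h] at this
    push_cast
    linear_combination this
  exact hp ((Nat.prime_dvd_prime_iff_eq Fact.out Nat.prime_three).mp
    ((CharP.cast_eq_zero_iff F p 3).mp h3))

end CharP

lemma IsPrimitiveRoot.dvd_card_sub_one {F : Type*} [Field F] [Fintype F] {ζ : F} {n : ℕ}
    [NeZero n] (h : IsPrimitiveRoot ζ n) : n ∣ Fintype.card F - 1 := by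
  classical
  rw [← Fintype.card_units, (h.isUnit_unit (NeZero.ne n)).eq_orderOf]
  exact orderOf_dvd_card

lemma mod_six_eq_five_of_isPrimitiveRoot {F : Type*} [Field F] [Fintype F] {p : ℕ} [Fact p.Prime]
    (hcard : Fintype.card F = p ^ 2) (hp : p % 3 = 2) {ζ : F} (hζ : IsPrimitiveRoot ζ 6) :
    p % 6 = 5 := by
  have h6 := hζ.dvd_card_sub_one
  rw [hcard] at h6
  rcases (Fact.out : p.Prime).eq_two_or_odd with rfl | hodd
  · norm_num at h6
  · omega

lemma finrank_zmod_eq_two_of_card_eq_sq {F : Type*} [Field F] [Fintype F] {p : ℕ} [Fact p.Prime]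
    [Algebra (ZMod p) F] (hcard : Fintype.card F = p ^ 2) : Module.finrank (ZMod p) F = 2 := by
  have h := Module.card_eq_pow_finrank (K := ZMod p) (V := F)
  rw [hcard, ZMod.card] at h
  exact (Nat.pow_right_injective (Fact.out : p.Prime).two_le h).symm

lemma sq_sub_one_div_six_eq {p : ℕ} (hp : p % 6 = 5) :
    (p ^ 2 - 1) / 6 = (p - 1) * ((p + 1) / 6) := by
  obtain ⟨m, rfl⟩ : ∃ m, p = 6 * m + 5 := ⟨p / 6, by omega⟩
  have hsq : (6 * m + 5) ^ 2 = 6 * ((6 * m + 4) * (m + 1)) + 1 := by ring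
  rw [hsq, Nat.add_sub_cancel, Nat.mul_div_cancel_left _ (by norm_num),
    show 6 * m + 5 - 1 = 6 * m + 4 by omega, show (6 * m + 5 + 1) / 6 = m + 1 by omega]

section PowerResidueChar

variable {F R : Type*} [Field F] [Fintype F] [CommRing R] {n : ℕ} {ζ : F} {ω : R} {χ : F → R}

def IsPowerResidueChar (n : ℕ) (ζ : F) (ω : R) (χ : F → R) : Prop :=
  ∀ x : F, x ≠ 0 → ∀ k : ℕ, x ^ ((Fintype.card F - 1) / n) = ζ ^ k → χ x = ω ^ k

lemma IsPowerResidueChar.exists_apply_ne_one (h : IsPowerResidueChar n ζ ω χ) (hn : 1 < n)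
    (hζ : IsPrimitiveRoot ζ n) (hω : IsPrimitiveRoot ω n) : ∃ x : F, x ≠ 0 ∧ χ x ≠ 1 := by
  classical
  have : NeZero n := ⟨by omega⟩
  have hdvd := hζ.dvd_card_sub_one
  have hcard : Nat.card Fˣ = Fintype.card F - 1 := by
    rw [Nat.card_eq_fintype_card, Fintype.card_units]
  have hpos : 0 < Fintype.card F - 1 := by have := Fintype.one_lt_card (α := F); omega
  obtain ⟨u, hu⟩ := exists_pow_ne_one_of_isCyclic (G := Fˣ) (k := (Fintype.card F - 1) / n)
    (Nat.div_ne_zero_iff_of_dvd hdvd |>.mpr ⟨hpos.ne', by omega⟩)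
    (by rw [hcard]; exact Nat.div_lt_self hpos hn)
  have hun : ((u : F) ^ ((Fintype.card F - 1) / n)) ^ n = 1 := by
    rw [← pow_mul, Nat.div_mul_cancel hdvd, ← Fintype.card_units, ← Units.val_pow_eq_pow_val,
      pow_card_eq_one, Units.val_one]
  obtain ⟨i, hi, hζi⟩ := hζ.eq_pow_of_pow_eq_one hun
  refine ⟨u, u.ne_zero, ?_⟩
  rw [h u u.ne_zero i hζi.symm]
  refine hω.pow_ne_one_of_pos_of_lt ?_ hi
  rintro rfl
  exact hu (Units.ext (by simpa using hζi.symm))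

variable {p : ℕ} [Fact p.Prime]

lemma IsPowerResidueChar.apply_algebraMap_eq_one [Algebra (ZMod p) F]
    (h : IsPowerResidueChar 6 ζ ω χ) (hcard : Fintype.card F = p ^ 2) (hp : p % 6 = 5)
    {c : ZMod p} (hc : c ≠ 0) : χ (algebraMap (ZMod p) F c) = 1 := by
  rw [h _ ((map_ne_zero _).mpr hc) 0, pow_zero]
  rw [hcard, sq_sub_one_div_six_eq hp, pow_mul, ← map_pow, ZMod.pow_card_sub_one_eq_one hc,
    map_one, one_pow, pow_zero]

lemma IsPowerResidueChar.apply_one_sub_two_mul [CharP F p] [IsDomain R]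
    (h : IsPowerResidueChar 6 ζ ω χ) (hcard : Fintype.card F = p ^ 2) (hp : p % 6 = 5)
    (hζ : IsPrimitiveRoot ζ 6) (hω : IsPrimitiveRoot ω 6) :
    χ (1 - 2 * ζ) = (-1) ^ ((p + 1) / 6) := by
  have hs := hζ.one_sub_two_mul_ne_zero (p := p) (by omega)
  have hsp : (1 - 2 * ζ) ^ (p - 1) = -1 := mul_right_cancel₀ hs (by
    rw [← pow_succ, Nat.sub_add_cancel (Fact.out : p.Prime).one_le,
      hζ.one_sub_two_mul_pow_char hp, neg_one_mul])
  rw [h _ hs (3 * ((p + 1) / 6)), pow_mul, hω.pow_three_eq_neg_one]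
  rw [hcard, sq_sub_one_div_six_eq hp, pow_mul, hsp, pow_mul, hζ.pow_three_eq_neg_one]

end PowerResidueChar

lemma trace_eq_zero_of_pow_card_eq_neg {K L : Type*} [Field K] [Field L] [Algebra K L]
    [Finite L] (h2 : Module.finrank K L = 2) {x : L} (hx : x ^ Nat.card K = -x) :
    Algebra.trace K L x = 0 := by
  apply FaithfulSMul.algebraMap_injective K L
  rw [FiniteField.algebraMap_trace_eq_sum_pow, h2, sum_range_succ, sum_range_one, pow_zero,
    pow_one, pow_one, hx, add_neg_cancel, map_zero]

section TraceGaussSum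

variable {K L R : Type*} [Field K] [Fintype K] [Field L] [Algebra K L] [CommRing R]

lemma sum_addChar_trace_smul [DecidableEq K] [IsDomain R] {ψ : AddChar K R} (hψ : ψ.IsPrimitive)
    (x : L) :
    ∑ c : K, ψ (Algebra.trace K L (c • x)) =
      if Algebra.trace K L x = 0 then (Fintype.card K : R) else 0 := by
  simp_rw [map_smul, smul_eq_mul]
  rw [AddChar.sum_mulShift _ hψ, Nat.cast_ite, Nat.cast_zero]

lemma sum_mulChar_algebraMap [Nontrivial R] {χ : MulChar L R}
    (hχK : ∀ c : K, c ≠ 0 → χ (algebraMap K L c) = 1) :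
    ∑ c : K, χ (algebraMap K L c) = Fintype.card K - 1 := by
  classical
  rw [← add_sum_erase _ _ (mem_univ 0), map_zero, MulChar.map_zero, zero_add,
    sum_congr rfl fun c hc ↦ hχK c (ne_of_mem_erase hc), sum_const,
    card_erase_of_mem (mem_univ 0), card_univ, nsmul_one, Nat.cast_pred Fintype.card_pos]

lemma card_sub_one_mul_gaussSum_trace [Fintype L] [DecidableEq K] [IsDomain R]
    {χ : MulChar L R} (hχ : χ ≠ 1) (hχK : ∀ c : K, c ≠ 0 → χ (algebraMap K L c) = 1)
    {ψ : AddChar K R} (hψ : ψ.IsPrimitive) :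
    (Fintype.card K - 1 : R) *
        gaussSum χ (ψ.compAddMonoidHom (Algebra.trace K L).toAddMonoidHom) =
      Fintype.card K * ∑ x with Algebra.trace K L x = 0, χ x := by
  set ψL := ψ.compAddMonoidHom (Algebra.trace K L).toAddMonoidHom
  have hshift : ∀ c : K, c ≠ 0 → ∑ x, χ x * ψ (Algebra.trace K L (c • x)) = gaussSum χ ψL := by
    intro c hc
    have hc' : algebraMap K L c ≠ 0 := (map_ne_zero _).mpr hc
    rw [← gaussSum_mulShift χ ψL (Units.mk0 _ hc'), Units.val_mk0, hχK c hc, one_mul]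
    simp [gaussSum, ψL, Algebra.smul_def]
  calc (Fintype.card K - 1 : R) * gaussSum χ ψL
      = ∑ c : K, ∑ x, χ x * ψ (Algebra.trace K L (c • x)) := by
        rw [← add_sum_erase _ _ (mem_univ 0)]
        simp only [zero_smul, map_zero, AddChar.map_zero_eq_one, mul_one,
          MulChar.sum_eq_zero_of_ne_one hχ, zero_add]
        rw [sum_congr rfl fun c hc ↦ hshift c (ne_of_mem_erase hc), sum_const,
          card_erase_of_mem (mem_univ 0), card_univ, nsmul_eq_mul, Nat.cast_pred Fintype.card_pos]
    _ = ∑ x, χ x * ∑ c : K, ψ (Algebra.trace K L (c • x)) := by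
        rw [sum_comm]
        simp only [mul_sum]
    _ = Fintype.card K * ∑ x with Algebra.trace K L x = 0, χ x := by
        simp only [sum_addChar_trace_smul hψ, mul_ite, mul_zero, sum_ite, sum_const_zero, add_zero]
        rw [← sum_mul, mul_comm]

lemma exists_smul_eq_of_trace_eq_zero [Fintype L] (h2 : Module.finrank K L = 2) {s : L}
    (hs : s ≠ 0) (hs0 : Algebra.trace K L s = 0) {x : L} (hx : Algebra.trace K L x = 0) :
    ∃ c : K, c • s = x := by
  have hker : Module.finrank K (LinearMap.ker (Algebra.trace K L)) = 1 := by
    have := LinearMap.finrank_range_add_finrank_ker (Algebra.trace K L)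
    rw [LinearMap.range_eq_top.mpr (Algebra.trace_surjective K L), finrank_top,
      Module.finrank_self, h2] at this
    omega
  obtain ⟨c, hc⟩ := (finrank_eq_one_iff_of_nonzero' (⟨s, hs0⟩ : LinearMap.ker (Algebra.trace K L))
    fun h ↦ hs (congrArg Subtype.val h)).mp hker ⟨x, hx⟩
  exact ⟨c, congrArg Subtype.val hc⟩

lemma sum_trace_eq_zero_eq [Fintype L] [DecidableEq K] [DecidableEq L] [Nontrivial R]
    (h2 : Module.finrank K L = 2) {s : L} (hs : s ≠ 0) (hs0 : Algebra.trace K L s = 0)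
    {χ : MulChar L R} (hχK : ∀ c : K, c ≠ 0 → χ (algebraMap K L c) = 1) :
    ∑ x with Algebra.trace K L x = 0, χ x = (Fintype.card K - 1 : R) * χ s := by
  have himage : ({x | Algebra.trace K L x = 0} : Finset L) = univ.image fun c : K ↦ c • s := by
    ext x
    simp only [mem_filter, mem_univ, true_and, mem_image]
    refine ⟨fun hx ↦ exists_smul_eq_of_trace_eq_zero h2 hs hs0 hx, ?_⟩
    rintro ⟨c, rfl⟩
    rw [map_smul, hs0, smul_zero]
  rw [himage, sum_image fun a _ b _ h ↦ smul_left_injective K hs h,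
    ← sum_mulChar_algebraMap hχK, sum_mul]
  simp only [Algebra.smul_def, map_mul]

theorem gaussSum_trace_eq_card_mul [Fintype L] [DecidableEq K] [DecidableEq L] [IsDomain R]
    [CharZero R] (h2 : Module.finrank K L = 2) {s : L} (hs : s ≠ 0)
    (hs0 : Algebra.trace K L s = 0) {χ : MulChar L R} (hχ : χ ≠ 1)
    (hχK : ∀ c : K, c ≠ 0 → χ (algebraMap K L c) = 1) {ψ : AddChar K R} (hψ : ψ.IsPrimitive) :
    gaussSum χ (ψ.compAddMonoidHom (Algebra.trace K L).toAddMonoidHom) =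
      Fintype.card K * χ s := by
  have hK : (Fintype.card K - 1 : R) ≠ 0 :=
    sub_ne_zero.mpr (Nat.cast_ne_one.mpr Fintype.one_lt_card.ne')
  refine mul_left_cancel₀ hK ?_
  rw [card_sub_one_mul_gaussSum_trace hχ hχK hψ, sum_trace_eq_zero_eq h2 hs hs0 hχK]
  ring

end TraceGaussSum

/-- Sextic Gauss sum at an inert prime: for a prime `p ≡ 2 mod 3` (inert in `ℚ(ζ₆)`),
the residue field `ℤ[ζ₆]/p` is the finite field `F` with `p²` elements containing a
primitive sixth root of unity `ζ`. With `χ` the sextic residue character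
(`χ(x) ≡ x^{(p²-1)/6}` via a fixed embedding `ζ ↦ ω = e^{2πi/6}`) and `ψ` the additive
character obtained from the trace to `𝔽_p`, the Gauss sum
`∑_{x ≠ 0} χ(x) ψ(x)` equals `p·χ(1-2ζ₆)`, which is `p` if `p ≡ 3 mod 4` and `-p` if
`p ≡ 1 mod 4`. -/
theorem stmt_3 (p : ℕ) [hp : Fact p.Prime] (hinert : p % 3 = 2)
    (F : Type*) [Field F] [Fintype F] [DecidableEq F]
    (hcard : Fintype.card F = p ^ 2)
    [Algebra (ZMod p) F]
    (ζ : F) (hζ : IsPrimitiveRoot ζ 6)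
    (ω : ℂ) (hω : ω = Complex.exp (2 * Real.pi * Complex.I / 6))
    (χ : F → ℂ) (hχ0 : χ 0 = 0)
    (hχmul : ∀ x y : F, χ (x * y) = χ x * χ y)
    (hχ : ∀ x : F, x ≠ 0 → ∀ k : ℕ, x ^ ((p ^ 2 - 1) / 6) = ζ ^ k → χ x = ω ^ k)
    (ψ : F → ℂ)
    (hψ : ∀ x : F, ψ x = Complex.exp (2 * Real.pi * Complex.I *
        ((Algebra.trace (ZMod p) F x).val : ℂ) / p)) :
    (∑ x ∈ Finset.univ.erase (0 : F), χ x * ψ x) = p * χ (1 - 2 * ζ) ∧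
    (p % 4 = 3 → (p : ℂ) * χ (1 - 2 * ζ) = p) ∧
    (p % 4 = 1 → (p : ℂ) * χ (1 - 2 * ζ) = -p) := by
  have : CharP F p := charP_of_injective_algebraMap (algebraMap (ZMod p) F).injective p
  have hres : IsPowerResidueChar 6 ζ ω χ := by rwa [IsPowerResidueChar, hcard]
  have hp6 := mod_six_eq_five_of_isPrimitiveRoot hcard hinert hζ
  have hω6 : IsPrimitiveRoot ω 6 := by
    rw [hω]
    exact_mod_cast Complex.isPrimitiveRoot_exp 6 (by norm_num)
  let χ' := mulCharOfField χ hχ0 (by simpa using hres 1 one_ne_zero 0 (by simp)) hχmul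
  have hχ' : χ' ≠ 1 := by
    obtain ⟨x, hx0, hx⟩ := hres.exists_apply_ne_one (by norm_num) hζ hω6
    exact fun h ↦ hx (by rw [← MulChar.one_apply (R' := ℂ) (isUnit_iff_ne_zero.mpr hx0), ← h]; rfl)
  have h2 := finrank_zmod_eq_two_of_card_eq_sq hcard
  have htr := trace_eq_zero_of_pow_card_eq_neg h2
    (by rw [Nat.card_zmod]; exact hζ.one_sub_two_mul_pow_char hp6)
  have hgauss := gaussSum_trace_eq_card_mul h2 (hζ.one_sub_two_mul_ne_zero (by omega)) htr hχ'
    (fun c hc ↦ hres.apply_algebraMap_eq_one hcard hp6 hc) (ZMod.isPrimitive_stdAddChar p)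
  have hsum : ∑ x ∈ univ.erase 0, χ x * ψ x =
      gaussSum χ' (ZMod.stdAddChar.compAddMonoidHom (Algebra.trace (ZMod p) F).toAddMonoidHom) := by
    rw [sum_erase _ (by rw [hχ0, zero_mul])]
    refine sum_congr rfl fun x _ ↦ ?_
    simp [χ', hψ, ZMod.stdAddChar_apply, ZMod.toCircle_apply]
  rw [hsum, hgauss, ZMod.card]
  have hχs := hres.apply_one_sub_two_mul hcard hp6 hζ hω6
  refine ⟨rfl, fun h4 ↦ ?_, fun h4 ↦ ?_⟩
  · rw [hχs, Even.neg_one_pow (Nat.even_iff.mpr (by omega)), mul_one]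
  · rw [hχs, Odd.neg_one_pow (Nat.odd_iff.mpr (by omega)), mul_neg_one]
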